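/- Let S = ℤ[x₁,x₂,c₂,c₃]/(2c₃) and let μ : S → S be the ring automorphism induced by exchanging x₁ and x₂ and fixing c₂ and c₃ (the ideal (2c₃) is stable under this exchange). Then the subring of μ-invariant elements of S is equal to the subring of S generated by the classes of x₁+x₂, x₁·x₂, c₂ and c₃. -/

import Mathlib

open MvPolynomial

/-- The ideal `(2c₃)` of `ℤ[x₁,x₂,c₂,c₃] = MvPolynomial (Fin 4) ℤ`,
where `x₁ = X 0`, `x₂ = X 1`, `c₂ = X 2`, `c₃ = X 3`. -/
noncomputable def Jrel : Ideal (MvPolynomial (Fin 4) ℤ) :=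
  Ideal.span {2 * X 3}

/-!
Every polynomial can be written `a + x₁ b` with `a, b` in the subring generated by
`x₁ + x₂`, `x₁ x₂`, `c₂`, `c₃`, which are swap-invariant. If the class of `a + x₁ b` is
invariant, then `(x₂ - x₁) b ∈ (2c₃)`; since `2` and `c₃` are primes not dividing `x₂ - x₁`,
already `b ∈ (2c₃)`, so the class is that of `a`.
-/

theorem Prime.mul_dvd_of_dvd_mul_of_not_dvd {M : Type*} [CommMonoidWithZero M] [IsCancelMulZero M]
    {p q d b : M} (hp : Prime p) (hq : Prime q) (hpd : ¬p ∣ d) (hqd : ¬q ∣ d)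
    (h : p * q ∣ d * b) : p * q ∣ b := by
  obtain ⟨c, rfl⟩ := (hp.dvd_or_dvd (dvd_of_mul_right_dvd h)).resolve_left hpd
  have hqdc : q ∣ d * c := by
    rw [mul_left_comm] at h
    exact (mul_dvd_mul_iff_left hp.ne_zero).1 h
  exact mul_dvd_mul_left p ((hq.dvd_or_dvd hqdc).resolve_left hqd)

namespace MvPolynomial

variable {σ : Type*}

theorem exists_mem_eq_add_X_mul {R : Type*} [CommRing R] (T : Subalgebra R (MvPolynomial σ R))
    {i j : σ} (hadd : X i + X j ∈ T) (hmul : X i * X j ∈ T)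
    (hX : ∀ k, k ≠ i → k ≠ j → X k ∈ T) (p : MvPolynomial σ R) :
    ∃ a ∈ T, ∃ b ∈ T, p = a + X i * b := by
  induction p using MvPolynomial.induction_on with
  | C r => exact ⟨C r, T.algebraMap_mem r, 0, T.zero_mem, by ring⟩
  | add p q hp hq =>
    obtain ⟨a, ha, b, hb, rfl⟩ := hp
    obtain ⟨a', ha', b', hb', rfl⟩ := hq
    exact ⟨a + a', T.add_mem ha ha', b + b', T.add_mem hb hb', by ring⟩
  | mul_X p k hp =>
    obtain ⟨a, ha, b, hb, rfl⟩ := hp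
    by_cases hki : k = i
    · subst hki
      -- `X i ^ 2 = (X i + X j) * X i - X i * X j`
      exact ⟨-(X k * X j * b), T.neg_mem (T.mul_mem hmul hb),
        a + (X k + X j) * b, T.add_mem ha (T.mul_mem hadd hb), by ring⟩
    by_cases hkj : k = j
    · subst hkj
      exact ⟨a * (X i + X k) + X i * X k * b, T.add_mem (T.mul_mem ha hadd) (T.mul_mem hmul hb),
        -a, T.neg_mem ha, by ring⟩
    exact ⟨a * X k, T.mul_mem ha (hX k hki hkj), b * X k, T.mul_mem hb (hX k hki hkj), by ring⟩

theorem two_mul_X_dvd_of_dvd_X_sub_X_mul {i j k : σ} (hij : i ≠ j) (hkj : k ≠ j)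
    {b : MvPolynomial σ ℤ} (h : 2 * X k ∣ (X j - X i) * b) : 2 * X k ∣ b := by
  classical
  have heval : eval (Pi.single j 1) (X j - X i : MvPolynomial σ ℤ) = 1 := by
    simp [hij]
  have hprime_two : Prime (2 : MvPolynomial σ ℤ) := by
    simpa using (prime_C_iff σ (r := (2 : ℤ))).2 Int.prime_two
  refine hprime_two.mul_dvd_of_dvd_mul_of_not_dvd X_prime ?_ ?_ h
  · intro h2
    have := heval ▸ map_dvd (eval (Pi.single j 1)) h2
    norm_num at this
  · intro hX
    have := heval ▸ map_dvd (eval (Pi.single j 1)) hX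
    simp [hkj] at this

end MvPolynomial

/-- Let `S = ℤ[x₁,x₂,c₂,c₃]/(2c₃)` and `μ : S → S` the ring automorphism induced by
exchanging `x₁` and `x₂` (and fixing `c₂, c₃`).  Then the `μ`-invariant elements of `S`
are exactly the elements of the subring generated by the classes of `x₁+x₂`, `x₁·x₂`,
`c₂` and `c₃`. -/
theorem stmt_7
    (μ : (MvPolynomial (Fin 4) ℤ ⧸ Jrel) ≃+* (MvPolynomial (Fin 4) ℤ ⧸ Jrel))
    (hμ : ∀ p : MvPolynomial (Fin 4) ℤ,
      μ (Ideal.Quotient.mk Jrel p) = Ideal.Quotient.mk Jrel (rename (Equiv.swap (0 : Fin 4) 1) p)) :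
    ∀ s : MvPolynomial (Fin 4) ℤ ⧸ Jrel,
      μ s = s ↔ s ∈ Subring.closure
        ({Ideal.Quotient.mk Jrel (X 0 + X 1), Ideal.Quotient.mk Jrel (X 0 * X 1),
          Ideal.Quotient.mk Jrel (X 2), Ideal.Quotient.mk Jrel (X 3)} :
            Set (MvPolynomial (Fin 4) ℤ ⧸ Jrel)) := by
  intro s
  obtain ⟨p, rfl⟩ := Ideal.Quotient.mk_surjective s
  set mk := Ideal.Quotient.mk Jrel
  set S := Subring.closure {mk (X 0 + X 1), mk (X 0 * X 1), mk (X 2), mk (X 3)}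
  have hS_fixed : S ≤ RingHom.eqLocus (μ : _ →+* _) (RingHom.id _) := by
    refine Subring.closure_le.2 ?_
    rintro _ (rfl | rfl | rfl | rfl) <;>
      simp [mk, hμ, Equiv.swap_apply_of_ne_of_ne, add_comm, mul_comm]
  refine ⟨fun hs => ?_, fun hs => hS_fixed hs⟩
  obtain ⟨a, ha, b, hb, rfl⟩ := exists_mem_eq_add_X_mul (subalgebraOfSubring (S.comap mk))
    (i := 0) (j := 1) (Subring.subset_closure (by simp)) (Subring.subset_closure (by simp))
    (fun k hk0 hk1 => Subring.subset_closure (by fin_cases k <;> simp_all)) p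
  have hdiff : mk ((X 1 - X 0) * b) = 0 := by
    have hμa : μ (mk a) = mk a := hS_fixed ha
    have hμb : μ (mk b) = mk b := hS_fixed hb
    simp only [map_add, map_mul, hμa, hμb, hμ, rename_X, Equiv.swap_apply_left] at hs
    simp only [map_mul, map_sub]
    linear_combination hs
  obtain ⟨c, rfl⟩ := two_mul_X_dvd_of_dvd_X_sub_X_mul (by decide) (by decide)
    (Ideal.mem_span_singleton.1 (Ideal.Quotient.eq_zero_iff_mem.1 hdiff))
  have hb0 : mk (2 * X 3 * c) = 0 :=
    Ideal.Quotient.eq_zero_iff_mem.2 (Ideal.mem_span_singleton.2 (dvd_mul_right _ _))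
  rw [map_add, map_mul, hb0, mul_zero, add_zero]
  exact ha
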